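/- For any hypothesis class H and integer k >= 0, ELdim(H, k) <= sup { t : sum_{i=0}^{k+1} binom(t, i) <= S(H, t) }, where S(H, t) is the tree shattering coefficient. -/

import Mathlib

/-- A depth-`t` `X`-valued tree: a family of maps `x_s : {-1,+1}^(s-1) → X`. -/
def XTree (X : Type*) (t : ℕ) := (s : Fin t) → (Fin s.val → ℤ) → X

/-- A sign path: a sequence with entries in `{-1,+1}`. -/
def IsSignPath {t : ℕ} (ε : Fin t → ℤ) : Prop := ∀ s, ε s = 1 ∨ ε s = -1

/-- `S(H, x)`: the set of sign paths realized by some hypothesis `h ∈ H` along the tree `x`,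
i.e. `ε_s = h (x_s (ε_1, …, ε_{s-1}))` for all `s`. -/
def realizedPaths {X : Type*} (H : Set (X → ℤ)) {t : ℕ} (x : XTree X t) :
    Set (Fin t → ℤ) :=
  {ε | IsSignPath ε ∧ ∃ h ∈ H, ∀ s : Fin t,
    ε s = h (x s (fun i => ε ⟨i.val, i.isLt.trans s.isLt⟩))}

/-- The tree shattering coefficient `S(H, t)`: the maximum of `|S(H, x)|` over
all depth-`t` `X`-valued trees `x`. -/
noncomputable def treeShatter {X : Type*} (H : Set (X → ℤ)) (t : ℕ) : ℕ :=
  ⨆ x : XTree X t, (realizedPaths H x).ncard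

/-- An extended mistake tree: leaves are labeled by hypotheses, and each internal node
carries an example `a : X`, the label `y ∈ {-1,+1}` of its dashed downward edge
(the dashed edge goes to the child labeled `y`), and the two subtrees
(first the `-1`-child, then the `+1`-child). -/
inductive EMT (X : Type*) where
  | leaf : (X → ℤ) → EMT X
  | node : X → ℤ → EMT X → EMT X → EMT X

/-- Validity of an extended mistake tree for the class `H`: the dashed-edge labels are in
`{-1,+1}` and every leaf is labeled by a hypothesis of `H` consistent with the
root-to-leaf path (and satisfying the accumulated constraint `P`). -/
def EMT.ValidFrom {X : Type*} (H : Set (X → ℤ)) (P : (X → ℤ) → Prop) : EMT X → Prop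
  | .leaf h => h ∈ H ∧ P h
  | .node a y tneg tpos => (y = 1 ∨ y = -1) ∧
      EMT.ValidFrom H (fun h => P h ∧ h a = -1) tneg ∧
      EMT.ValidFrom H (fun h => P h ∧ h a = 1) tpos

/-- The set of pairs `(number of solid edges, length)` of root-to-leaf paths of an
extended mistake tree. An edge to a child is solid iff that child is not the one the
dashed edge points to. -/
def EMT.paths {X : Type*} : EMT X → Set (ℕ × ℕ)
  | .leaf _ => {(0, 0)}
  | .node _ y tneg tpos =>
      (fun p => (p.1 + (if y = -1 then 0 else 1), p.2 + 1)) '' EMT.paths tneg ∪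
      (fun p => (p.1 + (if y = 1 then 0 else 1), p.2 + 1)) '' EMT.paths tpos

/-- A tree is `(k,m)`-difficult iff every root-to-leaf path using at most `k` solid
edges has length at least `m`. -/
def EMT.Difficult {X : Type*} (T : EMT X) (k m : ℕ) : Prop :=
  ∀ p ∈ T.paths, p.1 ≤ k → m ≤ p.2

/-! From a `(k, m)`-difficult extended mistake tree we build, by induction on `m`, a depth-`m`
`X`-valued tree along which at least `∑_{i ≤ k+1} C(m, i)` sign paths are realized. At the root
example `a`, the subtree behind the dashed edge is still `(k, m-1)`-difficult and the one behind
the solid edge is `(k-1, m-1)`-difficult; hanging the two trees obtained by induction below `a`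
(the first sign of a path selects the subtree) realizes the disjoint union of their paths, and
Pascal's rule `∑_{i ≤ k+1} C(m, i) = ∑_{i ≤ k+1} C(m-1, i) + ∑_{i ≤ k} C(m-1, i)` closes the
induction. For `k = 0` the solid side only has to contribute one path, which the constant tree
at `a` provides. So `m` lies in the set over which the supremum is taken. -/

theorem sum_range_choose_succ (m b : ℕ) :
    ∑ i ∈ Finset.range (b + 1), (m + 1).choose i =
      ∑ i ∈ Finset.range (b + 1), m.choose i + ∑ i ∈ Finset.range b, m.choose i := by
  induction b with
  | zero => simp
  | succ b ih =>
    rw [Finset.sum_range_succ, ih, Nat.choose_succ_succ, Finset.sum_range_succ _ (b + 1),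
      Finset.sum_range_succ _ b]
    ring

section

variable {X : Type*}

theorem realizedPaths_subset_pi (H : Set (X → ℤ)) {t : ℕ} (x : XTree X t) :
    realizedPaths H x ⊆ Set.univ.pi fun _ => {1, -1} :=
  fun _ hε s _ => hε.1 s

theorem realizedPaths_finite (H : Set (X → ℤ)) {t : ℕ} (x : XTree X t) :
    (realizedPaths H x).Finite :=
  (Set.Finite.pi fun _ => Set.toFinite {1, -1}).subset (realizedPaths_subset_pi H x)

theorem one_le_ncard_realizedPaths {H : Set (X → ℤ)} {t : ℕ} {x : XTree X t}
    (hx : (realizedPaths H x).Nonempty) : 1 ≤ (realizedPaths H x).ncard :=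
  (Set.ncard_pos (realizedPaths_finite H x)).2 hx

theorem ncard_realizedPaths_le_treeShatter (H : Set (X → ℤ)) {t : ℕ}
    (x : XTree X t) : (realizedPaths H x).ncard ≤ treeShatter H t := by
  unfold treeShatter
  refine le_ciSup (f := fun x : XTree X t => (realizedPaths H x).ncard)
    ⟨(Set.univ.pi fun (_ : Fin t) => ({1, -1} : Set ℤ)).ncard, ?_⟩ x
  rintro _ ⟨x', rfl⟩
  exact Set.ncard_le_ncard (realizedPaths_subset_pi H x')
    (Set.Finite.pi fun _ => Set.toFinite _)

end

namespace XTree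

variable {X : Type*} {m : ℕ}

def const (a : X) : XTree X m := fun _ _ => a

def node (a : X) (sub : ℤ → XTree X m) : XTree X (m + 1) :=
  Fin.cases (fun _ => a) fun j ε =>
    sub (ε ⟨0, j.succ_pos⟩) j fun i => ε ⟨i + 1, Nat.succ_lt_succ i.isLt⟩

theorem realizedPaths_const_nonempty {G : Set (X → ℤ)}
    (hsign : ∀ h ∈ G, ∀ a : X, h a = 1 ∨ h a = -1) (a : X) (hG : G.Nonempty) :
    (realizedPaths G (const a : XTree X m)).Nonempty := by
  obtain ⟨h, hh⟩ := hG
  exact ⟨fun _ => h a, fun _ => hsign h hh a, h, hh, fun _ => rfl⟩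

theorem cons_mem_realizedPaths_node {G G' : Set (X → ℤ)} {a : X} {c : ℤ}
    (hc : c = 1 ∨ c = -1) (hG' : ∀ h ∈ G', h ∈ G ∧ h a = c) (sub : ℤ → XTree X m)
    {ε : Fin m → ℤ} (hε : ε ∈ realizedPaths G' (sub c)) :
    Fin.cons c ε ∈ realizedPaths G (node a sub) := by
  obtain ⟨hsign, h, hh, hpath⟩ := hε
  exact ⟨Fin.cases hc hsign, h, (hG' h hh).1, Fin.cases (hG' h hh).2.symm fun j => hpath j⟩

theorem ncard_add_ncard_le_realizedPaths_node {G : Set (X → ℤ)} {a : X} {y : ℤ}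
    (hy : y = 1 ∨ y = -1) (G' : ℤ → Set (X → ℤ)) (hG' : ∀ c, ∀ h ∈ G' c, h ∈ G ∧ h a = c)
    (sub : ℤ → XTree X m) :
    (realizedPaths (G' y) (sub y)).ncard + (realizedPaths (G' (-y)) (sub (-y))).ncard ≤
      (realizedPaths G (node a sub)).ncard := by
  have hdisj : Disjoint (Fin.cons y '' realizedPaths (G' y) (sub y))
      (Fin.cons (-y) '' realizedPaths (G' (-y)) (sub (-y)) : Set (Fin (m + 1) → ℤ)) := by
    rw [Set.disjoint_iff]
    rintro _ ⟨⟨ε, -, rfl⟩, ⟨ε', -, hε'⟩⟩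
    have := congrFun hε' 0
    simp only [Fin.cons_zero] at this
    omega
  rw [← Set.ncard_image_of_injective (realizedPaths (G' y) (sub y))
      (Fin.cons_right_injective (α := fun _ => ℤ) y),
    ← Set.ncard_image_of_injective (realizedPaths (G' (-y)) (sub (-y)))
      (Fin.cons_right_injective (α := fun _ => ℤ) (-y)),
    ← Set.ncard_union_eq hdisj ((realizedPaths_finite _ _).image _)
      ((realizedPaths_finite _ _).image _)]
  refine Set.ncard_le_ncard ?_ (realizedPaths_finite _ _)
  rintro _ (⟨ε, hε, rfl⟩ | ⟨ε, hε, rfl⟩)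
  · exact cons_mem_realizedPaths_node hy (hG' y) sub hε
  · exact cons_mem_realizedPaths_node (by omega) (hG' (-y)) sub hε

end XTree

namespace EMT

variable {X : Type*} {H : Set (X → ℤ)}

theorem ValidFrom.nonempty {P : (X → ℤ) → Prop} :
    ∀ {T : EMT X}, T.ValidFrom H P → {h | h ∈ H ∧ P h}.Nonempty
  | .leaf h, hv => ⟨h, hv⟩
  | .node _ _ _ _, hv =>
    let ⟨h, hH, hP, _⟩ := hv.2.1.nonempty
    ⟨h, hH, hP⟩

theorem ValidFrom.child {P : (X → ℤ) → Prop} {a : X} {y c : ℤ} {tneg tpos : EMT X}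
    (hv : (node a y tneg tpos).ValidFrom H P) (hc : c = 1 ∨ c = -1) :
    (if c = 1 then tpos else tneg).ValidFrom H fun h => P h ∧ h a = c := by
  rcases hc with rfl | rfl
  · exact hv.2.2
  · exact hv.2.1

theorem mem_paths_node {a : X} {y c : ℤ} {tneg tpos : EMT X} (hc : c = 1 ∨ c = -1)
    {p : ℕ × ℕ} (hp : p ∈ (if c = 1 then tpos else tneg).paths) :
    (p.1 + (if y = c then 0 else 1), p.2 + 1) ∈ (node a y tneg tpos).paths := by
  rcases hc with rfl | rfl
  · exact Or.inr ⟨p, hp, rfl⟩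
  · exact Or.inl ⟨p, hp, rfl⟩

theorem Difficult.child {a : X} {y c : ℤ} {tneg tpos : EMT X} {k j m : ℕ}
    (hd : (node a y tneg tpos).Difficult k (m + 1)) (hc : c = 1 ∨ c = -1)
    (hj : j + (if y = c then 0 else 1) ≤ k) :
    (if c = 1 then tpos else tneg).Difficult j m := by
  intro p hp hpj
  have := hd _ (mem_paths_node hc hp) (by dsimp only; omega)
  exact Nat.le_of_succ_le_succ this

theorem exists_sum_choose_le_ncard_realizedPaths
    (hsign : ∀ h ∈ H, ∀ a : X, h a = 1 ∨ h a = -1) :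
    ∀ {m k : ℕ} {T : EMT X} {P : (X → ℤ) → Prop}, T.ValidFrom H P → T.Difficult k m →
      ∃ x : XTree X m, ∑ i ∈ Finset.range (k + 2), m.choose i ≤
        (realizedPaths {h | h ∈ H ∧ P h} x).ncard
  | 0, k, T, P, hv, _ => by
    obtain ⟨h, hh⟩ := hv.nonempty
    have hsum : ∑ i ∈ Finset.range (k + 2), (0 : ℕ).choose i = 1 := by
      simp [Finset.sum_range_succ']
    exact ⟨fun s => s.elim0, hsum ▸ one_le_ncard_realizedPaths
      ⟨Fin.elim0, fun s => s.elim0, h, hh, fun s => s.elim0⟩⟩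
  | m + 1, k, .leaf _, _, _, hd => absurd (hd (0, 0) rfl k.zero_le) (by omega)
  | m + 1, k, .node a y tneg tpos, P, hv, hd => by
    have hy := hv.1
    have hchild : ∀ c : ℤ, c = 1 ∨ c = -1 → ∃ x : XTree X m,
        ∑ i ∈ Finset.range (k + if y = c then 2 else 1), m.choose i ≤
          (realizedPaths {h | h ∈ H ∧ (P h ∧ h a = c)} x).ncard := by
      intro c hc
      by_cases hyc : y = c
      · simpa [hyc] using exists_sum_choose_le_ncard_realizedPaths hsign (hv.child hc)
          (hd.child hc (j := k) (by simp [hyc]))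
      · rcases k with _ | k
        · refine ⟨XTree.const a, ?_⟩
          simp only [hyc, if_false, zero_add, Finset.sum_range_one, Nat.choose_zero_right]
          exact one_le_ncard_realizedPaths <| XTree.realizedPaths_const_nonempty
            (fun h hh => hsign h hh.1) a (hv.child hc).nonempty
        · simpa [hyc] using exists_sum_choose_le_ncard_realizedPaths hsign (hv.child hc)
            (hd.child hc (j := k) (by simp [hyc]))
    have : Nonempty (XTree X m) := ⟨XTree.const a⟩
    choose! sub hsub using hchild
    have hny : y ≠ -y := by omega
    refine ⟨XTree.node a sub, ?_⟩
    calc ∑ i ∈ Finset.range (k + 2), (m + 1).choose i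
        = ∑ i ∈ Finset.range (k + 2), m.choose i + ∑ i ∈ Finset.range (k + 1), m.choose i :=
          sum_range_choose_succ m (k + 1)
      _ ≤ (realizedPaths {h | h ∈ H ∧ (P h ∧ h a = y)} (sub y)).ncard +
          (realizedPaths {h | h ∈ H ∧ (P h ∧ h a = -y)} (sub (-y))).ncard :=
        add_le_add (by simpa using hsub y hy) (by simpa [hny] using hsub (-y) (by omega))
      _ ≤ _ := XTree.ncard_add_ncard_le_realizedPaths_node (G := {h | h ∈ H ∧ P h}) hy
          (fun c => {h | h ∈ H ∧ (P h ∧ h a = c)}) (fun _ _ hh => ⟨⟨hh.1, hh.2.1⟩, hh.2.2⟩) sub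

end EMT

theorem stmt15 {X : Type*} (H : Set (X → ℤ))
    (hsign : ∀ h ∈ H, ∀ a : X, h a = 1 ∨ h a = -1)
    (k : ℕ) (m : ℕ)
    (hm : ∃ T : EMT X, T.ValidFrom H (fun _ => True) ∧ T.Difficult k m) :
    (m : ℕ∞) ≤ ⨆ (t : ℕ) (_ : ∑ i ∈ Finset.range (k + 2), t.choose i ≤ treeShatter H t),
      (t : ℕ∞) := by
  obtain ⟨T, hv, hd⟩ := hm
  obtain ⟨x, hx⟩ := EMT.exists_sum_choose_le_ncard_realizedPaths hsign hv hd
  refine le_iSup₂_of_le (f := fun (t : ℕ)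
    (_ : ∑ i ∈ Finset.range (k + 2), t.choose i ≤ treeShatter H t) => (t : ℕ∞)) m ?_ le_rfl
  simpa using hx.trans (ncard_realizedPaths_le_treeShatter _ x)
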